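/- arXiv:1809.02908 — 2 statements merged into one kernel-verified Lean document; each statement's English description precedes it below -/
import Mathlib

section
/- In a tensor product B_L ⊗ ⋯ ⊗ B₁ of seminormal abstract crystals, the reduced signature obtained from the word (−^{φ_i(b_L)} +^{ε_i(b_L)} ⋯ −^{φ_i(b₁)} +^{ε_i(b₁)}) by successively deleting consecutive +− pairs is independent of the order in which such deletions are performed, and has the form −^a +^b with a = φ_i(b) and b = ε_i(b), where b = b_L ⊗ ⋯ ⊗ b₁. -/
/-- One deletion step: remove an adjacent `+−` pair (here `true` = `+`, `false` = `−`). -/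
inductive DelStep : List Bool → List Bool → Prop
  | step (l r : List Bool) : DelStep (l ++ [true, false] ++ r) (l ++ r)

/-- Combine the pairs `(φ₂, ε₂)` (left factor) and `(φ₁, ε₁)` (right factor) by the tensor
product rule, using `⟨α_i^∨, wt b⟩ = φ_i(b) − ε_i(b)`:
`φ(b₂ ⊗ b₁) = max(φ₂, φ₁ + φ₂ − ε₂)` and `ε(b₂ ⊗ b₁) = max(ε₁, ε₂ − (φ₁ − ε₁))`. -/
def combineStats (p q : ℤ × ℤ) : ℤ × ℤ :=
  (max p.1 (q.1 + p.1 - p.2), max q.2 (p.2 - q.1 + q.2))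

/-- The pair `(φ_i(b), ε_i(b))` of the tensor product `b = b_L ⊗ ⋯ ⊗ b₁`, computed recursively
from the list `[(φ_i(b_L), ε_i(b_L)), …, (φ_i(b₁), ε_i(b₁))]`. -/
def sigStats : List (ℤ × ℤ) → ℤ × ℤ
  | [] => (0, 0)
  | p :: rest => combineStats p (sigStats rest)

/-- The word `−^{φ_i(b_L)} +^{ε_i(b_L)} ⋯ −^{φ_i(b₁)} +^{ε_i(b₁)}` (with `false` = `−`). -/
def sigWord : List (ℤ × ℤ) → List Bool
  | [] => []
  | p :: rest => List.replicate p.1.toNat false ++ List.replicate p.2.toNat true ++ sigWord rest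

/-!
Read a word from left to right, keeping the numbers `(a, b)` of unmatched `−` and unmatched `+`
seen so far: a `+` raises `b`, a `−` cancels an unmatched `+` if there is one and raises `a`
otherwise. Reading `+−` returns to the same state, so the final state is unchanged by deletions;
on a reduced word `−^a +^b` it is `(a, b)`, and on the word of `b_L ⊗ ⋯ ⊗ b₁` it is
`(φ_i(b), ε_i(b))`, because the tensor product rule is exactly how these counts compose.
-/

open List Relation

theorem foldl_eq_of_reflTransGen_delStep {σ : Type*} {f : σ → Bool → σ}
    (hf : ∀ s, f (f s true) false = s) {w v : List Bool} (h : ReflTransGen DelStep w v)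
    (s : σ) : w.foldl f s = v.foldl f s := by
  induction h with
  | refl => rfl
  | tail _ hstep ih =>
    obtain ⟨l, r⟩ := hstep
    simp only [ih, foldl_append, foldl_cons, foldl_nil, hf]

theorem exists_eq_replicate_append_replicate_of_reduced {w : List Bool}
    (hred : ∀ l r : List Bool, w ≠ l ++ [true, false] ++ r) :
    ∃ a b : ℕ, w = replicate a false ++ replicate b true := by
  induction w with
  | nil => exact ⟨0, 0, rfl⟩
  | cons x rest ih =>
    obtain ⟨a, b, rfl⟩ := ih fun l r h ↦ hred (x :: l) r (by simp [h])
    cases x with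
    | false => exact ⟨a + 1, b, rfl⟩
    | true =>
      cases a with
      | zero => exact ⟨0, b + 1, by simp [replicate_succ]⟩
      | succ a =>
        exact absurd rfl (hred [] (replicate a false ++ replicate b true))

/-- The state `(unmatched −, unmatched +)` after reading one more letter. -/
def signatureStep : ℕ × ℕ → Bool → ℕ × ℕ
  | (a, b), true => (a, b + 1)
  | (a, b), false => if b = 0 then (a + 1, 0) else (a, b - 1)

theorem signatureStep_true_false (s : ℕ × ℕ) :
    signatureStep (signatureStep s true) false = s := by
  obtain ⟨a, b⟩ := s
  simp [signatureStep]

theorem foldl_signatureStep_replicate_false (n c d : ℕ) :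
    (replicate n false).foldl signatureStep (c, d) = (c + (n - d), d - n) := by
  induction n generalizing c d with
  | zero => simp
  | succ n ih =>
    rw [replicate_succ, foldl_cons]
    rcases Nat.eq_zero_or_pos d with rfl | hd
    · simp only [signatureStep, if_true, ih, Prod.mk.injEq]
      omega
    · simp only [signatureStep, if_neg hd.ne', ih, Prod.mk.injEq]
      omega

theorem foldl_signatureStep_replicate_true (n c d : ℕ) :
    (replicate n true).foldl signatureStep (c, d) = (c, d + n) := by
  induction n generalizing d with
  | zero => rfl
  | succ n ih =>
    rw [replicate_succ, foldl_cons]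
    simp only [signatureStep, ih, Prod.mk.injEq, true_and]
    omega

theorem foldl_signatureStep_replicate_append_replicate (a b c d : ℕ) :
    (replicate a false ++ replicate b true).foldl signatureStep (c, d) =
      (c + (a - d), d - a + b) := by
  rw [foldl_append, foldl_signatureStep_replicate_false, foldl_signatureStep_replicate_true]

theorem sigStats_nonneg {L : List (ℤ × ℤ)} (hL : ∀ p ∈ L, 0 ≤ p.1 ∧ 0 ≤ p.2) :
    0 ≤ (sigStats L).1 ∧ 0 ≤ (sigStats L).2 := by
  induction L with
  | nil => simp [sigStats]
  | cons p rest ih =>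
    have hrest := ih fun q hq ↦ hL q (mem_cons_of_mem p hq)
    exact ⟨(hL p mem_cons_self).1.trans (le_max_left _ _), hrest.2.trans (le_max_left _ _)⟩

theorem foldl_signatureStep_sigWord {L : List (ℤ × ℤ)} (hL : ∀ p ∈ L, 0 ≤ p.1 ∧ 0 ≤ p.2)
    (c d : ℕ) :
    (sigWord L).foldl signatureStep (c, d) =
      (replicate (sigStats L).1.toNat false ++ replicate (sigStats L).2.toNat true).foldl
        signatureStep (c, d) := by
  induction L generalizing c d with
  | nil => rfl
  | cons p rest ih =>
    have hrest : ∀ q ∈ rest, 0 ≤ q.1 ∧ 0 ≤ q.2 := fun q hq ↦ hL q (mem_cons_of_mem p hq)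
    have hp := hL p mem_cons_self
    have hstats := sigStats_nonneg hrest
    rw [sigWord, foldl_append, foldl_signatureStep_replicate_append_replicate, ih hrest,
      foldl_signatureStep_replicate_append_replicate,
      foldl_signatureStep_replicate_append_replicate]
    simp only [sigStats, combineStats, Prod.mk.injEq]
    omega

/-- signature rule: starting from the word of a tensor product
`b = b_L ⊗ ⋯ ⊗ b₁` of seminormal crystals and successively deleting adjacent `+−` pairs,
any fully reduced result is independent of the order of deletions and equals
`−^{φ_i(b)} +^{ε_i(b)}`, with `φ_i(b)`, `ε_i(b)` given by the recursive tensor formulas. -/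
theorem signature_rule (L : List (ℤ × ℤ)) (hL : ∀ p ∈ L, 0 ≤ p.1 ∧ 0 ≤ p.2)
    (w : List Bool) (hw : Relation.ReflTransGen DelStep (sigWord L) w)
    (hred : ∀ l r : List Bool, w ≠ l ++ [true, false] ++ r) :
    w = List.replicate (sigStats L).1.toNat false ++
        List.replicate (sigStats L).2.toNat true := by
  obtain ⟨a, b, rfl⟩ := exists_eq_replicate_append_replicate_of_reduced hred
  have hfinal := (foldl_signatureStep_sigWord hL 0 0).symm.trans
    (foldl_eq_of_reflTransGen_delStep signatureStep_true_false hw (0, 0))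
  simp only [foldl_signatureStep_replicate_append_replicate, Prod.mk.injEq] at hfinal
  obtain ⟨ha, hb⟩ := hfinal
  congr 2 <;> omega
end

section
/- Let σ_m : B(Λ) → B(mΛ) be a similarity map of highest weight crystals sending u_Λ to u_{mΛ}. Then for any Weyl group element w, σ_m restricts to a map from the Demazure crystal B_w(Λ) into B_w(mΛ), and its image consists exactly of those b ∈ B_w(mΛ) such that in the string decomposition e_{i₁}^{max} e_{i₂}^{max} ⋯ e_{i_ℓ}^{max} b = u_{mΛ} (for a fixed reduced word w = s_{i₁}⋯s_{i_ℓ}), each e_{i_j} is applied a number of times divisible by m. -/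
/-- Iterate of a partially-defined map (`none` representing `0`). -/
def optIter {B : Type*} (g : B → Option B) : ℕ → B → Option B
  | 0, b => some b
  | k+1, b => (g b).bind (optIter g k)

/-- A seminormal (regular) abstract `U_q(g)`-crystal with index set `I`, weight lattice `P`,
where `pair i μ = ⟨α_i^∨, μ⟩` and `α i` is the `i`-th simple root. -/
structure Crystal (I : Type*) (P : Type*) [AddCommGroup P]
    (pair : I → P → ℤ) (α : I → P) (B : Type*) where
  e : I → B → Option B
  f : I → B → Option B
  wt : B → P
  ε : I → B → ℕ
  φ : I → B → ℕ
  /-- `⟨α_i^∨, α_i⟩ = 2` -/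
  pair_alpha : ∀ i : I, pair i (α i) = 2
  /-- `f_i b = b'` iff `b = e_i b'` -/
  f_eq_iff : ∀ (i : I) (b b' : B), f i b = some b' ↔ e i b' = some b
  /-- `ε_i(b) = max { k : e_i^k b ≠ 0 }` -/
  eps_max : ∀ (i : I) (b : B) (k : ℕ), (optIter (e i) k b).isSome ↔ k ≤ ε i b
  /-- `φ_i(b) = max { k : f_i^k b ≠ 0 }` -/
  phi_max : ∀ (i : I) (b : B) (k : ℕ), (optIter (f i) k b).isSome ↔ k ≤ φ i b
  /-- `φ_i(b) = ε_i(b) + ⟨α_i^∨, wt(b)⟩` -/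
  phi_eps : ∀ (i : I) (b : B), (φ i b : ℤ) = (ε i b : ℤ) + pair i (wt b)
  /-- `wt(f_i b) = wt(b) − α_i` -/
  wt_f : ∀ (i : I) (b b' : B), f i b = some b' → wt b' = wt b - α i

/-- Membership in the Demazure crystal `B_w(Λ)`: `Dem C u l b` means
`e_{i₁}^{max} e_{i₂}^{max} ⋯ e_{iℓ}^{max} b = u` where the list `l` records the indices
in order of application (so `l` is the reversed reduced word of `w`), and
`e_i^{max} b = e_i^{ε_i(b)} b`. -/
inductive Dem {I P B : Type*} [AddCommGroup P] {pair : I → P → ℤ} {α : I → P}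
    (C : Crystal I P pair α B) (u : B) : List I → B → Prop
  | nil : Dem C u [] u
  | cons (i : I) (l : List I) (b b' : B) :
      optIter (C.e i) (C.ε i b) b = some b' → Dem C u l b' → Dem C u (i :: l) b

/-- Like `Dem`, but additionally requiring that at each step the operator `e_i` is applied
a number of times (namely `ε_i` of the current element) divisible by `m`. -/
inductive DemDiv {I P B : Type*} [AddCommGroup P] {pair : I → P → ℤ} {α : I → P}
    (C : Crystal I P pair α B) (u : B) (m : ℕ) : List I → B → Prop
  | nil : DemDiv C u m [] u
  | cons (i : I) (l : List I) (b b' : B) :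
      m ∣ C.ε i b → optIter (C.e i) (C.ε i b) b = some b' →
      DemDiv C u m l b' → DemDiv C u m (i :: l) b

/-!
A similarity map `σ` turns each `e_i` into `e_i^m` and multiplies `ε_i` by `m`, so a step
`e_i^{ε_i(b)} b = b'` of a Demazure string becomes `e_i^{m ε_i(b)} (σ b) = σ b'`, a step whose
length is divisible by `m`. Conversely, given a step `e_i^{m k} b' = σ b₀`, the element `b'` is
`f_i^{m k} (σ b₀)`; as `φ_i (σ b₀) = m φ_i(b₀)`, we have `k ≤ φ_i(b₀)`, so `b := f_i^k b₀` exists,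
and `σ b = f_i^{m k} (σ b₀) = b'`. Then `ε_i(b) = k` by the scaling of `ε_i`.
-/

section optIter

variable {B B' : Type*}

theorem optIter_add (g : B → Option B) (a b : ℕ) (x : B) :
    optIter g (a + b) x = (optIter g a x).bind (optIter g b) := by
  induction a generalizing x with
  | zero => simp [optIter]
  | succ n ih =>
    rw [Nat.add_right_comm]
    cases h : g x <;> simp [optIter, h, ih]

theorem optIter_succ' (g : B → Option B) (k : ℕ) (x : B) :
    optIter g (k + 1) x = (optIter g k x).bind g := by
  rw [optIter_add]
  congr 1
  funext y
  cases h : g y <;> simp [optIter, h]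

theorem optIter_map_mul {g : B → Option B} {g' : B' → Option B'} {σ : B → B'} {m : ℕ}
    (hstep : ∀ b b', g b = some b' → optIter g' m (σ b) = some (σ b')) :
    ∀ {k : ℕ} {b b' : B}, optIter g k b = some b' → optIter g' (m * k) (σ b) = some (σ b')
  | 0, b, b', h => by cases h; rfl
  | k + 1, b, b', h => by
    obtain ⟨c, hc, hk⟩ := Option.bind_eq_some_iff.mp h
    rw [Nat.mul_succ, Nat.add_comm, optIter_add, hstep b c hc, Option.bind_some,
      optIter_map_mul hstep hk]

theorem optIter_symm {g g' : B → Option B} (h : ∀ b b', g b = some b' → g' b' = some b) :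
    ∀ {k : ℕ} {b b' : B}, optIter g k b = some b' → optIter g' k b' = some b
  | 0, b, b', hk => by cases hk; rfl
  | k + 1, b, b', hk => by
    obtain ⟨c, hc, hk⟩ := Option.bind_eq_some_iff.mp hk
    rw [optIter_succ', optIter_symm h hk, Option.bind_some, h b c hc]

end optIter

namespace Crystal

variable {I P B : Type*} [AddCommGroup P] {pair : I → P → ℤ} {α : I → P}

theorem optIter_f_eq_some_iff (C : Crystal I P pair α B) (i : I) (k : ℕ) (b b' : B) :
    optIter (C.f i) k b = some b' ↔ optIter (C.e i) k b' = some b :=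
  ⟨optIter_symm fun x y => (C.f_eq_iff i x y).mp,
    optIter_symm fun x y => (C.f_eq_iff i y x).mpr⟩

theorem exists_optIter_f_of_le_phi (C : Crystal I P pair α B) {i : I} {k : ℕ} {b : B}
    (hk : k ≤ C.φ i b) : ∃ b', optIter (C.f i) k b = some b' :=
  Option.isSome_iff_exists.mp ((C.phi_max i b k).mpr hk)

theorem le_phi_of_optIter_f_eq_some (C : Crystal I P pair α B) {i : I} {k : ℕ} {b b' : B}
    (h : optIter (C.f i) k b = some b') : k ≤ C.φ i b :=
  (C.phi_max i b k).mp (by rw [h]; rfl)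

end Crystal

section Similarity

variable {I P B B' : Type*} [AddCommGroup P] {pair : I → P → ℤ} {α : I → P}
  {C : Crystal I P pair α B} {C' : Crystal I P pair α B'} {m : ℕ} {σ : B → B'}

theorem exists_preimage_of_optIter_e_mul (hm : 0 < m)
    (hφ : ∀ i b, C'.φ i (σ b) = m * C.φ i b)
    (hf : ∀ i (b b' : B), C.f i b = some b' → optIter (C'.f i) m (σ b) = some (σ b'))
    {i : I} {k : ℕ} {b₀ : B} {b' : B'} (h : optIter (C'.e i) (m * k) b' = some (σ b₀)) :
    ∃ b, σ b = b' ∧ optIter (C.e i) k b = some b₀ := by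
  have hdown : optIter (C'.f i) (m * k) (σ b₀) = some b' :=
    (C'.optIter_f_eq_some_iff i _ _ _).mpr h
  have hk : k ≤ C.φ i b₀ := by
    have := C'.le_phi_of_optIter_f_eq_some hdown
    rw [hφ] at this
    exact Nat.le_of_mul_le_mul_left this hm
  obtain ⟨b, hb⟩ := C.exists_optIter_f_of_le_phi hk
  have hσb : some (σ b) = some b' := (optIter_map_mul (hf i) hb).symm.trans hdown
  exact ⟨b, Option.some_injective _ hσb, (C.optIter_f_eq_some_iff i _ _ _).mp hb⟩

theorem Dem.demDiv_map {u : B} (hε : ∀ i b, C'.ε i (σ b) = m * C.ε i b)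
    (he : ∀ i (b b' : B), C.e i b = some b' → optIter (C'.e i) m (σ b) = some (σ b'))
    {l : List I} {b : B} (hb : Dem C u l b) : DemDiv C' (σ u) m l (σ b) := by
  induction hb with
  | nil => exact DemDiv.nil
  | cons i l b b' hstep _ ih =>
    refine DemDiv.cons i l (σ b) (σ b') ⟨_, hε i b⟩ ?_ ih
    rw [hε]
    exact optIter_map_mul (he i) hstep

theorem DemDiv.exists_dem_of_map {u : B} (hm : 0 < m)
    (hε : ∀ i b, C'.ε i (σ b) = m * C.ε i b)
    (hφ : ∀ i b, C'.φ i (σ b) = m * C.φ i b)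
    (hf : ∀ i (b b' : B), C.f i b = some b' → optIter (C'.f i) m (σ b) = some (σ b'))
    {l : List I} {b' : B'} (hb' : DemDiv C' (σ u) m l b') :
    ∃ b, Dem C u l b ∧ σ b = b' := by
  induction hb' with
  | nil => exact ⟨u, Dem.nil, rfl⟩
  | cons i l b' b'' hdvd hstep _ ih =>
    obtain ⟨b₀, hdem, rfl⟩ := ih
    obtain ⟨k, hk⟩ := hdvd
    rw [hk] at hstep
    obtain ⟨b, rfl, hup⟩ := exists_preimage_of_optIter_e_mul hm hφ hf hstep
    have hεb : C.ε i b = k := Nat.eq_of_mul_eq_mul_left hm ((hε i b).symm.trans hk)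
    exact ⟨b, Dem.cons i l b b₀ (hεb ▸ hup) hdem, rfl⟩

end Similarity

theorem similarity_demazure_general {I P B B' : Type*} [AddCommGroup P]
    {pair : I → P → ℤ} {α : I → P}
    (C : Crystal I P pair α B) (C' : Crystal I P pair α B')
    (u : B)
    (u' : B')
    (m : ℕ) (hm : 0 < m) (σ : B → B') (hσu : σ u = u')
    (hε : ∀ i b, C'.ε i (σ b) = m * C.ε i b)
    (hφ : ∀ i b, C'.φ i (σ b) = m * C.φ i b)
    (he : ∀ i (b b' : B), C.e i b = some b' → optIter (C'.e i) m (σ b) = some (σ b'))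
    (hf : ∀ i (b b' : B), C.f i b = some b' → optIter (C'.f i) m (σ b) = some (σ b'))
    (l : List I) :
    (∀ b : B, Dem C u l b → DemDiv C' u' m l (σ b)) ∧
    (∀ b' : B', DemDiv C' u' m l b' → ∃ b : B, Dem C u l b ∧ σ b = b') := by
  subst hσu
  exact ⟨fun _ hb => hb.demDiv_map hε he, fun _ hb' => hb'.exists_dem_of_map hm hε hφ hf⟩

/-- a similarity map `σ_m : B(Λ) → B(mΛ)` with `σ(u_Λ) = u_{mΛ}` restricts to a
map `B_w(Λ) → B_w(mΛ)` whose image consists exactly of those `b ∈ B_w(mΛ)` such that, in the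
string decomposition `e_{i₁}^{max} ⋯ e_{iℓ}^{max} b = u_{mΛ}` along the fixed reduced word,
each `e_{i_j}` is applied a number of times divisible by `m`. -/
theorem similarity_demazure {I P B B' : Type*} [AddCommGroup P]
    {pair : I → P → ℤ} {α : I → P}
    (C : Crystal I P pair α B) (C' : Crystal I P pair α B')
    (u : B) (hu : ∀ i, C.e i u = none)
    (u' : B') (hu' : ∀ i, C'.e i u' = none)
    (m : ℕ) (hm : 0 < m) (σ : B → B') (hinj : Function.Injective σ) (hσu : σ u = u')
    (hε : ∀ i b, C'.ε i (σ b) = m * C.ε i b)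
    (hφ : ∀ i b, C'.φ i (σ b) = m * C.φ i b)
    (hwt : ∀ b, C'.wt (σ b) = m • C.wt b)
    (he : ∀ i (b b' : B), C.e i b = some b' → optIter (C'.e i) m (σ b) = some (σ b'))
    (hf : ∀ i (b b' : B), C.f i b = some b' → optIter (C'.f i) m (σ b) = some (σ b'))
    (l : List I) :
    (∀ b : B, Dem C u l b → DemDiv C' u' m l (σ b)) ∧
    (∀ b' : B', DemDiv C' u' m l b' → ∃ b : B, Dem C u l b ∧ σ b = b') :=
  similarity_demazure_general C C' u u' m hm σ hσu hε hφ he hf l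
end
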